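/- Suppose condition (I¹_ρ) holds for some ρ > 0: there exists a finite positive Borel measure dA^ρ on [0,1], with α^ρ[u] := ∫₀¹ u(t) dA^ρ(t) and 𝒦^ρ(s) := ∫₀¹ k(t,s) dA^ρ(t), such that α^ρ[γ] < 1, H[u] ≤ α^ρ[u] for every u ∈ K with ‖u‖ = ρ, and f^{−ρ,ρ} · sup_{t∈[0,1]} { |γ(t)|/(1−α^ρ[γ]) · ∫₀¹ 𝒦^ρ(s) g(s) ds + ∫₀¹ |k(t,s)| g(s) ds } < 1, where f^{−ρ,ρ} := ess sup { f(t,u)/ρ : t ∈ [0,1], −ρ ≤ u ≤ ρ }. Then for every u ∈ K with ‖u‖ = ρ and every real μ ≥ 1 one has μ·u ≠ Tu. -/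

import Mathlib

open MeasureTheory Set

/-- Supremum norm of `u` on `[0,1]`. -/
noncomputable def nrm (u : ℝ → ℝ) : ℝ := sSup ((fun t => |u t|) '' Icc (0:ℝ) 1)

/-- Minimum (infimum) of `u` on `[a,b]`. -/
noncomputable def minOnIcc (u : ℝ → ℝ) (a b : ℝ) : ℝ := sInf (u '' Icc a b)

/-- The perturbed Hammerstein operator `Tu(t) = γ(t)H[u] + ∫₀¹ k(t,s)g(s)f(s,u(s)) ds`. -/
noncomputable def Tham (k : ℝ → ℝ → ℝ) (g : ℝ → ℝ) (f : ℝ → ℝ → ℝ) (γ : ℝ → ℝ)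
    (H : (ℝ → ℝ) → ℝ) (u : ℝ → ℝ) (t : ℝ) : ℝ :=
  γ t * H u + ∫ s in (0:ℝ)..1, k t s * g s * f s (u s)

/-- Condition (I¹_ρ) for sign-changing kernels (with `f^{-ρ,ρ}`). -/
def CondI1C (k : ℝ → ℝ → ℝ) (g : ℝ → ℝ) (f : ℝ → ℝ → ℝ) (γ : ℝ → ℝ)
    (H : (ℝ → ℝ) → ℝ) (K : Set (ℝ → ℝ)) (ρ : ℝ) : Prop :=
  ∃ μA : Measure ℝ, IsFiniteMeasure μA ∧ μA ((Icc (0:ℝ) 1)ᶜ) = 0 ∧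
    (∫ t, γ t ∂μA) < 1 ∧
    (∀ u ∈ K, nrm u = ρ → H u ≤ ∫ t, u t ∂μA) ∧
    ∃ fb : ℝ,
      (∀ᵐ t ∂(volume.restrict (Icc (0:ℝ) 1)), ∀ u : ℝ, -ρ ≤ u → u ≤ ρ → f t u ≤ fb * ρ) ∧
      fb * sSup ((fun t => |γ t| / (1 - ∫ t', γ t' ∂μA) *
          (∫ s in (0:ℝ)..1, (∫ t', k t' s ∂μA) * g s) +
          ∫ s in (0:ℝ)..1, |k t s| * g s) '' Icc (0:ℝ) 1) < 1

/-!
Integrating the equation `μ u = γ H[u] + ∫ k g f(·, u)` against `dA` and using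
`H[u] ≤ α[u] ≤ μ α[u]` gives `(1 - α[γ]) H[u] ≤ ∫ 𝒦 g f(·, u) ≤ f^{-ρ,ρ} ρ ∫ 𝒦 g`. The middle
step needs `𝒦 ≥ 0`: testing `0 ≤ H ≤ α` on functions of `K` of norm `ρ` that equal `c ρ` on
`[a,b]` and approach `-ρ` off `[a,b]` shows that `dA` puts mass at most `c A([a,b])` outside
`[a,b]`, and this is outweighed by `k ≥ c₁ Φ ≥ c Φ` on `[a,b]`. Feeding the bound on `H[u]` back
into the equation bounds `ρ = ‖u‖` by `ρ f^{-ρ,ρ}` times the supremum in `(I¹_ρ)`, i.e. by less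
than `ρ`.
-/

open Filter Topology Metric

theorem nrm_le {u : ℝ → ℝ} {r : ℝ} (h : ∀ t ∈ Icc (0:ℝ) 1, |u t| ≤ r) : nrm u ≤ r :=
  csSup_le ((nonempty_Icc.2 zero_le_one).image _) (forall_mem_image.2 h)

theorem abs_le_nrm {u : ℝ → ℝ} (hu : ContinuousOn u (Icc 0 1)) {t : ℝ} (ht : t ∈ Icc (0:ℝ) 1) :
    |u t| ≤ nrm u :=
  le_csSup (isCompact_Icc.bddAbove_image hu.abs) (mem_image_of_mem _ ht)

theorem minOnIcc_eq_of_eqOn {u : ℝ → ℝ} {a b m : ℝ} (hab : a ≤ b)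
    (h : EqOn u (fun _ => m) (Icc a b)) : minOnIcc u a b = m := by
  rw [minOnIcc, h.image_eq, (nonempty_Icc.2 hab).image_const, csInf_singleton]

theorem measureReal_compl_le_of_le_integral_thickenedIndicator {Ω : Type*} [MeasurableSpace Ω]
    [PseudoEMetricSpace Ω] [OpensMeasurableSpace Ω] {A : Measure Ω} [IsFiniteMeasure A]
    {S : Set Ω} (hS : IsClosed S) {δ : ℕ → ℝ} (hδ : ∀ n, 0 < δ n)
    (hδ0 : Tendsto δ atTop (𝓝 0)) {c : ℝ}
    (h : ∀ n, A.real univ ≤ (1 + c) * ∫ x, (thickenedIndicator (hδ n) S x : ℝ) ∂A) :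
    A.real Sᶜ ≤ c * A.real S := by
  have hlim := (tendsto_integral_thickenedIndicator_of_isClosed A hS hδ hδ0).const_mul (1 + c)
  have := ge_of_tendsto' hlim h
  rw [measureReal_compl hS.measurableSet]
  linarith

theorem measureReal_compl_Icc_le {A : Measure ℝ} [IsFiniteMeasure A] {a b c ρ : ℝ}
    (hA : A (Icc 0 1)ᶜ = 0) (hab : a ≤ b) (hρ : 0 < ρ) (hc₀ : 0 ≤ c) (hc₁ : c ≤ 1)
    (hw : ∀ w : ℝ → ℝ, ContinuousOn w (Icc 0 1) → nrm w = ρ → c * nrm w ≤ minOnIcc w a b →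
      0 ≤ ∫ t, w t ∂A) :
    A.real (Icc a b)ᶜ ≤ c * A.real (Icc a b) := by
  by_cases hsub : Icc (0:ℝ) 1 ⊆ Icc a b
  · rw [(measureReal_eq_zero_iff).2 (measure_mono_null (compl_subset_compl.2 hsub) hA)]
    positivity
  obtain ⟨t₀, ht₀, ht₀ab⟩ := not_subset.1 hsub
  have hne : (Icc a b).Nonempty := nonempty_Icc.2 hab
  set d := infDist t₀ (Icc a b)
  have hd : 0 < d := (isClosed_Icc.notMem_iff_infDist_pos hne).1 ht₀ab
  have hδ (n : ℕ) : 0 < d / (n + 1) := by positivity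
  have hδ0 : Tendsto (fun n : ℕ => d / (n + 1)) atTop (𝓝 0) := by
    simpa [div_eq_mul_inv] using tendsto_one_div_add_atTop_nhds_zero_nat.const_mul d
  refine measureReal_compl_le_of_le_integral_thickenedIndicator isClosed_Icc hδ hδ0 fun n => ?_
  set p : ℝ → ℝ := fun t => thickenedIndicator (hδ n) (Icc a b) t
  have hp (t : ℝ) : 0 ≤ p t ∧ p t ≤ 1 :=
    ⟨NNReal.coe_nonneg _, NNReal.coe_le_one.2 (thickenedIndicator_le_one _ _ t)⟩
  have hpab : EqOn p 1 (Icc a b) := fun t ht => by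
    simp only [p, thickenedIndicator_one _ _ ht, NNReal.coe_one, Pi.one_apply]
  have hpt₀ : p t₀ = 0 := by
    have : t₀ ∉ thickening (d / (n + 1)) (Icc a b) := by
      rw [mem_thickening_iff_infDist_lt hne, not_lt]
      exact div_le_self hd.le (by linarith [n.cast_nonneg (α := ℝ)])
    simp only [p, thickenedIndicator_zero _ _ this, NNReal.coe_zero]
  set w : ℝ → ℝ := fun t => ρ * ((1 + c) * p t - 1)
  have hw_cont : Continuous w := by fun_prop
  have hw_abs : ∀ t ∈ Icc (0:ℝ) 1, |w t| ≤ ρ := fun t _ => by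
    rw [abs_mul, abs_of_pos hρ, mul_le_iff_le_one_right hρ, abs_le]
    constructor <;> nlinarith [hp t]
  have hw_nrm : nrm w = ρ :=
    (nrm_le hw_abs).antisymm
      (by simpa [w, hpt₀, abs_of_pos hρ] using abs_le_nrm hw_cont.continuousOn ht₀)
  have hw_min : minOnIcc w a b = c * ρ :=
    minOnIcc_eq_of_eqOn hab fun t ht => by simp only [w, hpab ht, Pi.one_apply]; ring
  have hint := hw w hw_cont.continuousOn hw_nrm (by rw [hw_nrm, hw_min])
  have hp_int : Integrable p A := integrable_thickenedIndicator _ (hδ n)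
  rw [integral_const_mul, integral_sub (hp_int.const_mul _) (integrable_const 1),
    integral_const_mul, integral_const, smul_eq_mul, mul_one] at hint
  nlinarith

theorem integral_nonneg_of_abs_le_of_le_on {Ω : Type*} [MeasurableSpace Ω] {A : Measure Ω}
    [IsFiniteMeasure A] {h : Ω → ℝ} {S : Set Ω} (hS : MeasurableSet S) {φ c c₁ : ℝ}
    (hcc₁ : c ≤ c₁) (hmass : A.real Sᶜ ≤ c * A.real S)
    (hh : AEStronglyMeasurable h A) (habs : ∀ᵐ x ∂A, |h x| ≤ φ)
    (hlow : ∀ᵐ x ∂A, x ∈ S → c₁ * φ ≤ h x) :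
    0 ≤ ∫ x, h x ∂A := by
  rcases eq_zero_or_neZero A with rfl | _
  · simp
  have hφ : 0 ≤ φ := by
    obtain ⟨x, hx⟩ := habs.exists
    exact (abs_nonneg _).trans hx
  have hint : Integrable h A := .of_bound hh φ (by simpa only [Real.norm_eq_abs] using habs)
  have hin : ∫ x in S, c₁ * φ ∂A ≤ ∫ x in S, h x ∂A :=
    setIntegral_mono_on_ae (integrable_const _).integrableOn hint.integrableOn hS hlow
  have hout : ∫ x in Sᶜ, -φ ∂A ≤ ∫ x in Sᶜ, h x ∂A :=
    setIntegral_mono_ae (integrable_const _).integrableOn hint.integrableOn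
      (habs.mono fun x hx => (abs_le.1 hx).1)
  rw [setIntegral_const, smul_eq_mul] at hin hout
  rw [← integral_add_compl hS hint]
  nlinarith [mul_le_mul_of_nonneg_right hmass hφ,
    mul_nonneg (mul_nonneg (sub_nonneg.2 hcc₁) hφ) (measureReal_nonneg (μ := A) (s := S))]

theorem abs_le_of_eq_add_integral {β : Type*} [MeasurableSpace β] {ν : Measure β}
    {κ g G : β → ℝ} {x c h μ M : ℝ} (heq : μ * x = c * h + ∫ s, κ s * G s ∂ν) (hμ : 1 ≤ μ)
    (hh : 0 ≤ h) (hκg : Integrable (fun s => |κ s| * g s) ν)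
    (hGg : ∀ᵐ s ∂ν, 0 ≤ G s ∧ G s ≤ M * g s) :
    |x| ≤ |c| * h + M * ∫ s, |κ s| * g s ∂ν := by
  have hκG : ∫ s, |κ s * G s| ∂ν ≤ M * ∫ s, |κ s| * g s ∂ν := by
    rw [← integral_const_mul]
    refine integral_mono_of_nonneg (ae_of_all _ fun s => abs_nonneg _) (hκg.const_mul M) ?_
    filter_upwards [hGg] with s hGs
    rw [abs_mul, abs_of_nonneg hGs.1]
    nlinarith [mul_le_mul_of_nonneg_left hGs.2 (abs_nonneg (κ s))]
  calc |x| ≤ |μ * x| := by rw [abs_mul]; nlinarith [abs_nonneg x, le_abs_self μ]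
    _ = |c * h + ∫ s, κ s * G s ∂ν| := by rw [heq]
    _ ≤ |c * h| + ∫ s, |κ s * G s| ∂ν :=
        (abs_add_le _ _).trans (by gcongr; exact abs_integral_le_integral_abs)
    _ = |c| * h + ∫ s, |κ s * G s| ∂ν := by rw [abs_mul, abs_of_nonneg hh]
    _ ≤ |c| * h + M * ∫ s, |κ s| * g s ∂ν := by gcongr

section Kernel

variable {α β : Type*} [MeasurableSpace α] [MeasurableSpace β] {A : Measure α} [IsFiniteMeasure A]
  {ν : Measure β} {k : α → β → ℝ} {Φ g G : β → ℝ} {M : ℝ}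

theorem ae_ae_abs_le_of_forall_mem [SFinite ν] (hk : Measurable (Function.uncurry k))
    (hΦ : Measurable Φ) {S : Set α} (hS : ∀ᵐ t ∂A, t ∈ S)
    (habs : ∀ t ∈ S, ∀ᵐ s ∂ν, |k t s| ≤ Φ s) :
    ∀ᵐ s ∂ν, ∀ᵐ t ∂A, |k t s| ≤ Φ s :=
  (Measure.ae_ae_comm (p := fun t s => |k t s| ≤ Φ s)
    (measurableSet_le hk.abs (hΦ.comp measurable_snd))).1 (hS.mono habs)

theorem ae_integral_nonneg_of_abs_le_of_le_on [SFinite ν] {S T : Set α} (hT : MeasurableSet T)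
    {c c₁ : ℝ} (hk : Measurable (Function.uncurry k)) (hΦ : Measurable Φ) (hcc₁ : c ≤ c₁)
    (hmass : A.real Tᶜ ≤ c * A.real T) (hS : ∀ᵐ t ∂A, t ∈ S)
    (habs : ∀ t ∈ S, ∀ᵐ s ∂ν, |k t s| ≤ Φ s) (hlow : ∀ t ∈ T, ∀ᵐ s ∂ν, c₁ * Φ s ≤ k t s) :
    ∀ᵐ s ∂ν, 0 ≤ ∫ t, k t s ∂A := by
  have hlow' : ∀ᵐ s ∂ν, ∀ᵐ t ∂A, t ∈ T → c₁ * Φ s ≤ k t s := by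
    refine (Measure.ae_ae_comm ?_).1 (ae_of_all _ fun t => eventually_imp_distrib_left.2 (hlow t))
    simp only [imp_iff_not_or, ofPred_or]
    exact (measurable_fst hT).compl.union
      (measurableSet_le ((hΦ.comp measurable_snd).const_mul c₁) hk)
  filter_upwards [ae_ae_abs_le_of_forall_mem hk hΦ hS habs, hlow'] with s hs_abs hs_low
  exact integral_nonneg_of_abs_le_of_le_on hT hcc₁ hmass
    (hk.comp measurable_prodMk_right).aestronglyMeasurable hs_abs hs_low

theorem integrable_prod_kernel_mul [SFinite ν] (hk : Measurable (Function.uncurry k))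
    (hΦ : Measurable Φ) (hG : AEStronglyMeasurable G ν) (hgΦ : Integrable (fun s => g s * Φ s) ν)
    (hkΦ : ∀ᵐ t ∂A, ∀ᵐ s ∂ν, |k t s| ≤ Φ s) (hGg : ∀ᵐ s ∂ν, 0 ≤ G s ∧ G s ≤ M * g s) :
    Integrable (fun q : α × β => k q.1 q.2 * G q.2) (A.prod ν) := by
  have hkΦ' : ∀ᵐ q ∂A.prod ν, |k q.1 q.2| ≤ Φ q.2 :=
    (Measure.ae_prod_iff_ae_ae (measurableSet_le hk.abs (hΦ.comp measurable_snd))).2 hkΦ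
  have hGg' : ∀ᵐ q ∂A.prod ν, 0 ≤ G q.2 ∧ G q.2 ≤ M * g q.2 :=
    Measure.quasiMeasurePreserving_snd.ae hGg
  refine ((hgΦ.const_mul M).comp_snd A).mono' (hk.aestronglyMeasurable.mul
    (hG.comp_quasiMeasurePreserving Measure.quasiMeasurePreserving_snd)) ?_
  filter_upwards [hkΦ', hGg'] with q hkq hGq
  rw [norm_mul, Real.norm_eq_abs, Real.norm_eq_abs, abs_of_nonneg hGq.1]
  nlinarith [abs_nonneg (k q.1 q.2), mul_le_mul_of_nonneg_left hGq.2 (abs_nonneg (k q.1 q.2))]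

theorem integrable_integral_kernel_mul [SFinite ν] (hk : Measurable (Function.uncurry k))
    (hg : AEStronglyMeasurable g ν) (hg₀ : ∀ᵐ s ∂ν, 0 ≤ g s)
    (hgΦ : Integrable (fun s => g s * Φ s) ν) (hkΦ : ∀ᵐ s ∂ν, ∀ᵐ t ∂A, |k t s| ≤ Φ s) :
    Integrable (fun s => (∫ t, k t s ∂A) * g s) ν := by
  refine (hgΦ.mul_const (A.real univ)).mono'
    ((hk.stronglyMeasurable.integral_prod_left' (μ := A)).aestronglyMeasurable.mul hg) ?_
  filter_upwards [hkΦ, hg₀] with s hs hgs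
  have := norm_integral_le_of_norm_le_const (f := fun t => k t s)
    (by simpa only [Real.norm_eq_abs] using hs)
  rw [norm_mul, Real.norm_of_nonneg hgs]
  nlinarith

theorem integrable_abs_kernel_mul {t : α} (hk : Measurable (Function.uncurry k))
    (hg : AEStronglyMeasurable g ν) (hg₀ : ∀ᵐ s ∂ν, 0 ≤ g s)
    (hgΦ : Integrable (fun s => g s * Φ s) ν) (hkΦ : ∀ᵐ s ∂ν, |k t s| ≤ Φ s) :
    Integrable (fun s => |k t s| * g s) ν := by
  refine hgΦ.mono' ((hk.comp measurable_prodMk_left).abs.aestronglyMeasurable.mul hg) ?_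
  filter_upwards [hkΦ, hg₀] with s hs hgs
  rw [norm_mul, Real.norm_of_nonneg hgs, Real.norm_eq_abs, abs_abs, mul_comm]
  exact mul_le_mul_of_nonneg_left hs hgs

theorem mul_integral_eq_of_ae_eq_add_integral [SFinite ν] {u γ : α → ℝ} {h μ : ℝ}
    (hγ : Integrable γ A) (hkG : Integrable (fun q : α × β => k q.1 q.2 * G q.2) (A.prod ν))
    (heq : ∀ᵐ t ∂A, μ * u t = γ t * h + ∫ s, k t s * G s ∂ν) :
    μ * ∫ t, u t ∂A = (∫ t, γ t ∂A) * h + ∫ s, (∫ t, k t s ∂A) * G s ∂ν := by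
  calc μ * ∫ t, u t ∂A = ∫ t, (γ t * h + ∫ s, k t s * G s ∂ν) ∂A := by
        rw [← integral_const_mul]; exact integral_congr_ae heq
    _ = (∫ t, γ t ∂A) * h + ∫ s, ∫ t, k t s * G s ∂A ∂ν := by
        rw [integral_add (hγ.mul_const h) hkG.integral_prod_left, integral_mul_const,
          integral_integral_swap hkG]
    _ = _ := by simp only [integral_mul_const]

theorem le_div_of_ae_eq_add_integral [SFinite ν] {u γ : α → ℝ} {h μ : ℝ}
    (hγ : Integrable γ A) (hkG : Integrable (fun q : α × β => k q.1 q.2 * G q.2) (A.prod ν))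
    (hkg : Integrable (fun s => (∫ t, k t s ∂A) * g s) ν)
    (heq : ∀ᵐ t ∂A, μ * u t = γ t * h + ∫ s, k t s * G s ∂ν)
    (hμ : 1 ≤ μ) (hh : 0 ≤ h) (hhu : h ≤ ∫ t, u t ∂A) (hαγ : ∫ t, γ t ∂A < 1)
    (hk₀ : ∀ᵐ s ∂ν, 0 ≤ ∫ t, k t s ∂A) (hGg : ∀ᵐ s ∂ν, 0 ≤ G s ∧ G s ≤ M * g s) :
    h ≤ M * ((∫ s, (∫ t, k t s ∂A) * g s ∂ν) / (1 - ∫ t, γ t ∂A)) := by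
  have hfubini := mul_integral_eq_of_ae_eq_add_integral hγ hkG heq
  have hkG_le : ∫ s, (∫ t, k t s ∂A) * G s ∂ν ≤ M * ∫ s, (∫ t, k t s ∂A) * g s ∂ν := by
    rw [← integral_const_mul]
    refine integral_mono_of_nonneg ?_ (hkg.const_mul M) ?_
    · filter_upwards [hk₀, hGg] with s hs hGs using mul_nonneg hs hGs.1
    · filter_upwards [hk₀, hGg] with s hs hGs
      nlinarith [mul_le_mul_of_nonneg_left hGs.2 hs]
  rw [mul_div_assoc', le_div_iff₀ (sub_pos.2 hαγ)]
  nlinarith [mul_nonneg (sub_nonneg.2 hμ) (hh.trans hhu)]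

theorem abs_le_of_forall_mul_eq_add_integral [SFinite ν] {S : Set α} {u γ : α → ℝ} {F : β → ℝ}
    {h μ : ℝ} (hk : Measurable (Function.uncurry k)) (hΦ : Measurable Φ) (hg : Measurable g)
    (hg₀ : ∀ᵐ s ∂ν, 0 ≤ g s) (hgΦ : Integrable (fun s => g s * Φ s) ν) (hS : ∀ᵐ t ∂A, t ∈ S)
    (hkΦ : ∀ t ∈ S, ∀ᵐ s ∂ν, |k t s| ≤ Φ s) (hk₀ : ∀ᵐ s ∂ν, 0 ≤ ∫ t, k t s ∂A)
    (hF : AEStronglyMeasurable F ν) (hFM : ∀ᵐ s ∂ν, 0 ≤ F s ∧ F s ≤ M) (hγ : Integrable γ A)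
    (heq : ∀ t ∈ S, μ * u t = γ t * h + ∫ s, k t s * g s * F s ∂ν)
    (hμ : 1 ≤ μ) (hh : 0 ≤ h) (hhu : h ≤ ∫ t, u t ∂A) (hαγ : ∫ t, γ t ∂A < 1) :
    ∀ t ∈ S, |u t| ≤ M * (|γ t| / (1 - ∫ t', γ t' ∂A) * ∫ s, (∫ t', k t' s ∂A) * g s ∂ν +
      ∫ s, |k t s| * g s ∂ν) := by
  set G : β → ℝ := fun s => g s * F s
  have heq' (t : α) (ht : t ∈ S) : μ * u t = γ t * h + ∫ s, k t s * G s ∂ν := by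
    rw [heq t ht]; simp only [G, mul_assoc]
  have hGg : ∀ᵐ s ∂ν, 0 ≤ G s ∧ G s ≤ M * g s := by
    filter_upwards [hg₀, hFM] with s hgs hFs
    exact ⟨mul_nonneg hgs hFs.1, by nlinarith [mul_le_mul_of_nonneg_left hFs.2 hgs]⟩
  have hkG := integrable_prod_kernel_mul hk hΦ (hg.aestronglyMeasurable.mul hF) hgΦ
    (hS.mono hkΦ) hGg
  have hkg := integrable_integral_kernel_mul hk hg.aestronglyMeasurable hg₀ hgΦ
    (ae_ae_abs_le_of_forall_mem hk hΦ hS hkΦ)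
  have hh_le := le_div_of_ae_eq_add_integral hγ hkG hkg (hS.mono heq') hμ hh hhu hαγ hk₀ hGg
  intro t ht
  have hu_le := abs_le_of_eq_add_integral (heq' t ht) hμ hh
    (integrable_abs_kernel_mul hk hg.aestronglyMeasurable hg₀ hgΦ (hkΦ t ht)) hGg
  have hγh := mul_le_mul_of_nonneg_left hh_le (abs_nonneg (γ t))
  linarith [show |γ t| * (M * ((∫ s, (∫ t, k t s ∂A) * g s ∂ν) / (1 - ∫ t, γ t ∂A))) =
    M * (|γ t| / (1 - ∫ t, γ t ∂A) * ∫ s, (∫ t, k t s ∂A) * g s ∂ν) by ring]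

end Kernel

theorem bddAbove_image_abs_div_mul_add_integral {α β : Type*} [TopologicalSpace α]
    [MeasurableSpace α] [MeasurableSpace β] {ν : Measure β} {k : α → β → ℝ} {γ : α → ℝ}
    {Φ g : β → ℝ} {S : Set α} {d X : ℝ} (hS : IsCompact S) (hγ : ContinuousOn γ S) (hd : 0 ≤ d)
    (hX : 0 ≤ X) (hk : Measurable (Function.uncurry k)) (hg : Measurable g)
    (hg₀ : ∀ᵐ s ∂ν, 0 ≤ g s) (hgΦ : Integrable (fun s => g s * Φ s) ν)
    (hkΦ : ∀ t ∈ S, ∀ᵐ s ∂ν, |k t s| ≤ Φ s) :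
    BddAbove ((fun t => |γ t| / d * X + ∫ s, |k t s| * g s ∂ν) '' S) := by
  obtain ⟨C, hC⟩ := hS.exists_bound_of_continuousOn hγ
  refine ⟨C / d * X + ∫ s, g s * Φ s ∂ν, forall_mem_image.2 fun t ht => ?_⟩
  have hkg : ∫ s, |k t s| * g s ∂ν ≤ ∫ s, g s * Φ s ∂ν :=
    integral_mono_ae (integrable_abs_kernel_mul hk hg.aestronglyMeasurable hg₀ hgΦ (hkΦ t ht))
      hgΦ (by
        filter_upwards [hkΦ t ht, hg₀] with s hs hgs
        rw [mul_comm]; exact mul_le_mul_of_nonneg_left hs hgs)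
  have hγC : |γ t| ≤ C := by simpa only [Real.norm_eq_abs] using hC t ht
  gcongr

theorem aemeasurable_comp_of_ae_continuous {α : Type*} [MeasurableSpace α] {μ : Measure α}
    {f : α → ℝ → ℝ} {u : α → ℝ} (hf_meas : ∀ v, Measurable fun t => f t v)
    (hf_cont : ∀ᵐ t ∂μ, Continuous (f t)) (hu : AEMeasurable u μ) :
    AEMeasurable (fun t => f t (u t)) μ := by
  classical
  set N := toMeasurable μ {t | ¬Continuous (f t)}
  have hN : ∀ᵐ t ∂μ, t ∉ N := by
    rw [ae_iff]
    simpa [N, measure_toMeasurable] using ae_iff.1 hf_cont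
  -- `f'` agrees with `f` off the null set `N` and is continuous in `v` for every `t`
  set f' : α → ℝ → ℝ := fun t v => if t ∈ N then 0 else f t v
  have hf'_cont (t : α) : Continuous (f' t) := by
    by_cases ht : t ∈ N
    · simp only [f', ht, if_true, continuous_const]
    · simp only [f', ht, if_false]
      by_contra hcont
      exact ht (subset_toMeasurable _ _ hcont)
  have hf'_meas (v : ℝ) : Measurable fun t => f' t v :=
    Measurable.ite (measurableSet_toMeasurable _ _) measurable_const (hf_meas v)
  refine ((measurable_uncurry_of_continuous_of_measurable hf'_cont hf'_meas).comp_aemeasurable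
    (hu.prodMk aemeasurable_id)).congr ?_
  filter_upwards [hN] with t ht
  simp [ht]

theorem stmt5_general
    (k : ℝ → ℝ → ℝ) (g : ℝ → ℝ) (f : ℝ → ℝ → ℝ) (Φ γ : ℝ → ℝ) (a b c₁ c₂ c : ℝ)
    (H : (ℝ → ℝ) → ℝ) (K : Set (ℝ → ℝ))
    (hk_meas : Measurable (Function.uncurry k))
    (hab : a ≤ b)
    (hΦ_meas : Measurable Φ)
    (hc₁ : c₁ ∈ Ioc (0:ℝ) 1)
    (hkΦ_abs : ∀ t ∈ Icc (0:ℝ) 1, ∀ᵐ s ∂(volume.restrict (Icc (0:ℝ) 1)), |k t s| ≤ Φ s)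
    (hkΦ_low : ∀ t ∈ Icc a b, ∀ᵐ s ∂(volume.restrict (Icc (0:ℝ) 1)), c₁ * Φ s ≤ k t s)
    (hg_meas : Measurable g)
    (hg_nonneg : ∀ᵐ s ∂(volume.restrict (Icc (0:ℝ) 1)), 0 ≤ g s)
    (hgΦ_int : IntegrableOn (fun s => g s * Φ s) (Icc (0:ℝ) 1))
    (hf_meas : ∀ u : ℝ, Measurable (fun t => f t u))
    (hf_cont : ∀ᵐ t ∂(volume.restrict (Icc (0:ℝ) 1)), Continuous (f t))
    (hf_nonneg : ∀ t u : ℝ, 0 ≤ f t u)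
    (hγ_cont : ContinuousOn γ (Icc (0:ℝ) 1))
    (hc₂ : c₂ ∈ Ioc (0:ℝ) 1)
    (hc : c = min c₁ c₂)
    (hK : K = {u : ℝ → ℝ | ContinuousOn u (Icc (0:ℝ) 1) ∧ c * nrm u ≤ minOnIcc u a b})
    (hH_nonneg : ∀ u ∈ K, 0 ≤ H u)
    (ρ : ℝ) (hρ : 0 < ρ) (hI1 : CondI1C k g f γ H K ρ) :
    ∀ u ∈ K, nrm u = ρ → ∀ μ : ℝ, 1 ≤ μ →
      ¬ (∀ t ∈ Icc (0:ℝ) 1, μ * u t = Tham k g f γ H u t) := by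
  intro u hu hnrm μ hμ hfix
  obtain ⟨A, hAfin, hA, hαγ, hHα, M, hfM, hMΨ⟩ := hI1
  subst hK
  set ν := volume.restrict (Icc (0:ℝ) 1)
  have hν (F : ℝ → ℝ) : ∫ s in (0:ℝ)..1, F s = ∫ s, F s ∂ν := by
    rw [intervalIntegral.integral_of_le zero_le_one, integral_Icc_eq_integral_Ioc]
  simp only [Tham, hν] at hMΨ hfix
  have hA' : ∀ᵐ t ∂A, t ∈ Icc (0:ℝ) 1 := hA
  have hcc₁ : c ≤ c₁ := hc ▸ min_le_left _ _
  have hmass : A.real (Icc a b)ᶜ ≤ c * A.real (Icc a b) :=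
    measureReal_compl_Icc_le hA hab hρ (hc ▸ le_min hc₁.1.le hc₂.1.le) (hcc₁.trans hc₁.2)
      fun w hw hwρ hwK => (hH_nonneg w ⟨hw, hwK⟩).trans (hHα w ⟨hw, hwK⟩ hwρ)
  have hk₀ := ae_integral_nonneg_of_abs_le_of_le_on measurableSet_Icc hk_meas hΦ_meas hcc₁
    hmass hA' hkΦ_abs hkΦ_low
  have hFM : ∀ᵐ s ∂ν, 0 ≤ f s (u s) ∧ f s (u s) ≤ M * ρ := by
    filter_upwards [hfM, ae_restrict_mem measurableSet_Icc] with s hfs hs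
    have hus := abs_le.1 (hnrm ▸ abs_le_nrm hu.1 hs)
    exact ⟨hf_nonneg _ _, hfs _ hus.1 hus.2⟩
  have hM : 0 ≤ M * ρ := by
    have : (ae ν).NeBot := ae_restrict_neBot.2 (by simp)
    obtain ⟨s, hs⟩ := hFM.exists
    exact hs.1.trans hs.2
  have hu_Ψ := abs_le_of_forall_mul_eq_add_integral hk_meas hΦ_meas hg_meas hg_nonneg hgΦ_int hA'
    hkΦ_abs hk₀ (aemeasurable_comp_of_ae_continuous hf_meas hf_cont
      (hu.1.aemeasurable measurableSet_Icc)).aestronglyMeasurable hFM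
    (Measure.restrict_eq_self_of_ae_mem hA' ▸ hγ_cont.integrableOn_compact isCompact_Icc)
    hfix hμ (hH_nonneg u hu) (hHα u hu hnrm) hαγ
  have hΨ := bddAbove_image_abs_div_mul_add_integral isCompact_Icc hγ_cont (sub_pos.2 hαγ).le
    (integral_nonneg_of_ae (by filter_upwards [hk₀, hg_nonneg] with s h1 h2 using mul_nonneg h1 h2))
    hk_meas hg_meas hg_nonneg hgΦ_int hkΦ_abs
  have hρ_le : ρ ≤ M * ρ * sSup _ :=
    calc ρ = nrm u := hnrm.symm
      _ ≤ _ := nrm_le fun t ht => (hu_Ψ t ht).trans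
        (mul_le_mul_of_nonneg_left (le_csSup hΨ (mem_image_of_mem _ ht)) hM)
  nlinarith [mul_lt_mul_of_pos_left hMΨ hρ]

theorem stmt5
    (k : ℝ → ℝ → ℝ) (g : ℝ → ℝ) (f : ℝ → ℝ → ℝ) (Φ γ : ℝ → ℝ) (a b c₁ c₂ c : ℝ)
    (H : (ℝ → ℝ) → ℝ) (K : Set (ℝ → ℝ))
    (hk_meas : Measurable (Function.uncurry k))
    (hk_cont : ∀ τ ∈ Icc (0:ℝ) 1, ∀ᵐ s ∂(volume.restrict (Icc (0:ℝ) 1)),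
      Filter.Tendsto (fun t => |k t s - k τ s|) (nhdsWithin τ (Icc (0:ℝ) 1)) (nhds 0))
    (ha : 0 ≤ a) (hab : a ≤ b) (hb : b ≤ 1)
    (hΦ_meas : Measurable Φ)
    (hΦ_bdd : ∃ C, ∀ᵐ s ∂(volume.restrict (Icc (0:ℝ) 1)), |Φ s| ≤ C)
    (hc₁ : c₁ ∈ Ioc (0:ℝ) 1)
    (hkΦ_abs : ∀ t ∈ Icc (0:ℝ) 1, ∀ᵐ s ∂(volume.restrict (Icc (0:ℝ) 1)), |k t s| ≤ Φ s)
    (hkΦ_low : ∀ t ∈ Icc a b, ∀ᵐ s ∂(volume.restrict (Icc (0:ℝ) 1)), c₁ * Φ s ≤ k t s)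
    (hg_meas : Measurable g)
    (hg_nonneg : ∀ᵐ s ∂(volume.restrict (Icc (0:ℝ) 1)), 0 ≤ g s)
    (hgΦ_int : IntegrableOn (fun s => g s * Φ s) (Icc (0:ℝ) 1))
    (hΦg_pos : 0 < ∫ s in a..b, Φ s * g s)
    (hf_meas : ∀ u : ℝ, Measurable (fun t => f t u))
    (hf_cont : ∀ᵐ t ∂(volume.restrict (Icc (0:ℝ) 1)), Continuous (f t))
    (hf_nonneg : ∀ t u : ℝ, 0 ≤ f t u)
    (hf_bdd : ∀ r > 0, ∃ C, ∀ᵐ t ∂(volume.restrict (Icc (0:ℝ) 1)), ∀ u ∈ Icc (-r) r, f t u ≤ C)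
    (hγ_cont : ContinuousOn γ (Icc (0:ℝ) 1))
    (hc₂ : c₂ ∈ Ioc (0:ℝ) 1)
    (hγ_low : ∀ t ∈ Icc a b, c₂ * nrm γ ≤ γ t)
    (hc : c = min c₁ c₂)
    (hK : K = {u : ℝ → ℝ | ContinuousOn u (Icc (0:ℝ) 1) ∧ c * nrm u ≤ minOnIcc u a b})
    (hH_nonneg : ∀ u ∈ K, 0 ≤ H u)
    (hH_cont : ∀ u ∈ K, ∀ ε > 0, ∃ δ > 0, ∀ v ∈ K,
      nrm (fun t => u t - v t) < δ → |H u - H v| < ε)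
    (hH_bdd : ∀ M : ℝ, ∃ M', ∀ u ∈ K, nrm u ≤ M → H u ≤ M')
    (ρ : ℝ) (hρ : 0 < ρ) (hI1 : CondI1C k g f γ H K ρ) :
    ∀ u ∈ K, nrm u = ρ → ∀ μ : ℝ, 1 ≤ μ →
      ¬ (∀ t ∈ Icc (0:ℝ) 1, μ * u t = Tham k g f γ H u t) :=
  stmt5_general k g f Φ γ a b c₁ c₂ c H K hk_meas hab hΦ_meas hc₁ hkΦ_abs hkΦ_low hg_meas hg_nonneg
    hgΦ_int hf_meas hf_cont hf_nonneg hγ_cont hc₂ hc hK hH_nonneg ρ hρ hI1
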